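/- Let (s_j)_{j≥1} be a sequence of positive real numbers and let (g_j)_{j≥1} be a sequence of uniformly bounded continuous complex-valued functions on ℝ. Then the set W = { ν ∈ P(ℝ) : there exists a sequence of real numbers t_n → ∞ such that for every j ≥ 1, ξ_{s_j t_n} → g_j weakly in L²(ℝ, ν) } is a G_δ subset of P(ℝ). -/

import Mathlib

open MeasureTheory Filter Topology
open scoped ENNReal NNReal

/-- `ξ_s(x) = exp(2πisx)`. -/
noncomputable def xi (s x : ℝ) : ℂ := Complex.exp (2 * Real.pi * Complex.I * s * x)

/-- Weak convergence of a sequence to `g` in `L²(ℝ, ν)`. -/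
def WeakL2Tendsto (φ : ℕ → ℝ → ℂ) (g : ℝ → ℂ) (ν : Measure ℝ) : Prop :=
  ∀ f : ℝ → ℂ, MemLp f 2 ν →
    Tendsto (fun n => ∫ x, φ n x * (starRingEnd ℂ) (f x) ∂ν) atTop
      (𝓝 (∫ x, g x * (starRingEnd ℂ) (f x) ∂ν))

/-!
The characters `ξ_{s t}` all have `L²(ν)`-norm one, and a bounded sequence in a Hilbert space
converges weakly as soon as it converges against a dense set of test vectors. There is one
countable family `E_k` of compactly supported continuous functions that is dense in `L²(ν)` for
every finite Borel measure `ν` at once (cut-offs of a dense sequence of `C(ℝ, ℂ)`), so `ν ∈ W`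
iff some `t_n → ∞` makes the countably many pairings `∫ (ξ_{s_j t_n} - g_j) conj(E_k) dν` tend to
zero. Each pairing is continuous in `ν` for the weak topology, and a diagonal choice of `t_n`
writes this condition as `⋂_N ⋃_{T ≥ N} (finite intersection of open sets)`.
-/

theorem tendsto_inner_of_denseRange {𝕜 H ι κ : Type*} [RCLike 𝕜] [NormedAddCommGroup H]
    [InnerProductSpace 𝕜 H] {l : Filter ι} {x : ι → H} {y : H} {M : ℝ≥0}
    (hx : ∀ i, ‖x i‖ ≤ M) {e : κ → H} (he : DenseRange e)
    (h : ∀ k, Tendsto (fun i => inner 𝕜 (e k) (x i)) l (𝓝 (inner 𝕜 (e k) y))) (z : H) :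
    Tendsto (fun i => inner 𝕜 z (x i)) l (𝓝 (inner 𝕜 z y)) := by
  have hlip : ∀ i, LipschitzWith M fun z => inner 𝕜 z (x i) := fun i =>
    LipschitzWith.of_dist_le_mul fun a b => by
      rw [dist_eq_norm, dist_eq_norm, ← inner_sub_left, mul_comm]
      exact (norm_inner_le_norm _ _).trans (by gcongr; exact hx i)
  have hclosed := (LipschitzWith.uniformEquicontinuous _ M hlip).equicontinuous
    |>.isClosed_setOfPred_tendsto (l := l)
      (continuous_id.inner continuous_const : Continuous fun z => inner 𝕜 z y)
  exact he.induction_on z hclosed h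

theorem integral_mul_conj_eq_inner {X : Type*} [MeasurableSpace X] {μ : Measure X}
    {φ f : X → ℂ} (hφ : MemLp φ 2 μ) (hf : MemLp f 2 μ) :
    ∫ x, φ x * (starRingEnd ℂ) (f x) ∂μ = inner ℂ (hf.toLp f) (hφ.toLp φ) := by
  rw [L2.inner_def]
  refine integral_congr_ae ?_
  filter_upwards [hf.coeFn_toLp, hφ.coeFn_toLp] with x hfx hφx
  rw [RCLike.inner_apply, hfx, hφx, mul_comm]

theorem weakL2Tendsto_iff_of_denseRange {κ : Type*} {μ : Measure ℝ} {φ : ℕ → ℝ → ℂ}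
    {g : ℝ → ℂ} {E : κ → ℝ → ℂ} (hφ : ∀ n, MemLp (φ n) 2 μ) {M : ℝ≥0}
    (hM : ∀ n, eLpNorm (φ n) 2 μ ≤ M) (hg : MemLp g 2 μ) (hE : ∀ k, MemLp (E k) 2 μ)
    (hdense : DenseRange fun k => (hE k).toLp (E k)) :
    WeakL2Tendsto φ g μ ↔ ∀ k, Tendsto (fun n => ∫ x, φ n x * (starRingEnd ℂ) (E k x) ∂μ)
      atTop (𝓝 (∫ x, g x * (starRingEnd ℂ) (E k x) ∂μ)) := by
  refine ⟨fun h k => h (E k) (hE k), fun h f hf => ?_⟩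
  simp only [integral_mul_conj_eq_inner (hφ _) hf, integral_mul_conj_eq_inner hg hf,
    integral_mul_conj_eq_inner (hφ _) (hE _), integral_mul_conj_eq_inner hg (hE _)] at h ⊢
  refine tendsto_inner_of_denseRange (M := M) (fun n => ?_) hdense h _
  rw [Lp.norm_toLp]
  exact ENNReal.toReal_le_coe_of_le_coe (hM n)

theorem norm_xi (s x : ℝ) : ‖xi s x‖ = 1 := by
  rw [xi, Complex.norm_exp]
  simp

theorem continuous_xi (s : ℝ) : Continuous (xi s) := by
  unfold xi
  fun_prop

theorem memLp_xi {μ : Measure ℝ} [IsFiniteMeasure μ] (s : ℝ) (p : ℝ≥0∞) : MemLp (xi s) p μ :=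
  .of_bound (continuous_xi s).aestronglyMeasurable 1 (.of_forall fun x => (norm_xi s x).le)

theorem eLpNorm_xi_le {μ : Measure ℝ} [IsProbabilityMeasure μ] (s : ℝ) (p : ℝ≥0∞) :
    eLpNorm (xi s) p μ ≤ 1 := by
  simpa using eLpNorm_le_of_ae_bound (μ := μ) (p := p) (.of_forall fun x => (norm_xi s x).le)

theorem continuous_integral_of_norm_le {X 𝕜 : Type*} [TopologicalSpace X] [MeasurableSpace X]
    [OpensMeasurableSpace X] [RCLike 𝕜] {f : X → 𝕜} (hf : Continuous f) {C : ℝ}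
    (hC : ∀ x, ‖f x‖ ≤ C) : Continuous fun μ : ProbabilityMeasure X => ∫ x, f x ∂μ :=
  continuous_iff_continuousAt.2 fun _ =>
    (ProbabilityMeasure.tendsto_iff_forall_integral_rclike_tendsto 𝕜).1 tendsto_id
      (BoundedContinuousFunction.ofNormedAddCommGroup f hf C hC)

theorem continuous_integral_mul_conj_of_norm_le {X : Type*} [TopologicalSpace X]
    [MeasurableSpace X] [OpensMeasurableSpace X] {f h : X → ℂ} (hf : Continuous f)
    (hh : Continuous h) {C D : ℝ} (hfC : ∀ x, ‖f x‖ ≤ C) (hhD : ∀ x, ‖h x‖ ≤ D) :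
    Continuous fun μ : ProbabilityMeasure X => ∫ x, f x * (starRingEnd ℂ) (h x) ∂μ :=
  continuous_integral_of_norm_le (hf.mul hh.star) (C := C * D) fun x => by
    rw [norm_mul, Complex.norm_conj]
    exact mul_le_mul (hfC x) (hhD x) (norm_nonneg _) ((norm_nonneg _).trans (hfC x))

theorem isGδ_setOf_exists_tendsto_atTop {X Y : Type*} [TopologicalSpace X] [PseudoMetricSpace Y]
    {F : ℕ → ℝ → X → Y} {G : ℕ → X → Y} (hF : ∀ i T, Continuous (F i T))
    (hG : ∀ i, Continuous (G i)) :
    IsGδ {x | ∃ t : ℕ → ℝ, Tendsto t atTop atTop ∧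
      ∀ i, Tendsto (fun n => F i (t n) x) atTop (𝓝 (G i x))} := by
  set U : ℕ → Set X := fun N => ⋃ T ∈ Set.Ici (N : ℝ), ⋂ i ∈ Set.Iic N,
    {x | dist (F i T x) (G i x) < 1 / (N + 1)} with hU
  have hUo : ∀ N, IsOpen (U N) := fun N =>
    isOpen_biUnion fun T _ => (Set.finite_Iic N).isOpen_biInter fun i _ =>
      isOpen_lt ((hF i T).dist (hG i)) continuous_const
  convert IsGδ.iInter_of_isOpen hUo using 1
  ext x
  simp only [hU, Set.mem_ofPred_eq, Set.mem_iInter, Set.mem_iUnion, Set.mem_Ici, Set.mem_Iic,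
    exists_prop]
  constructor
  · rintro ⟨t, ht, hconv⟩ N
    have hsmall : ∀ᶠ n in atTop, ∀ i ∈ Set.Iic N, dist (F i (t n) x) (G i x) < 1 / (N + 1) :=
      (Set.finite_Iic N).eventually_all.2 fun i _ =>
        Metric.tendsto_nhds.1 (hconv i) _ Nat.one_div_pos_of_nat
    obtain ⟨n, hn, hsmall⟩ := ((ht.eventually_ge_atTop (N : ℝ)).and hsmall).exists
    exact ⟨t n, hn, hsmall⟩
  · intro hmem
    choose T hTN hT using hmem
    refine ⟨T, tendsto_atTop_mono hTN tendsto_natCast_atTop_atTop, fun i => ?_⟩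
    refine tendsto_iff_dist_tendsto_zero.2 (squeeze_zero' (.of_forall fun _ => dist_nonneg) ?_
      tendsto_one_div_add_atTop_nhds_zero_nat)
    filter_upwards [eventually_ge_atTop i] with N hN
    exact (hT N i hN).le

theorem exists_seq_hasCompactSupport_forall_norm_sub_le (X F : Type*) [TopologicalSpace X]
    [T2Space X] [LocallyCompactSpace X] [SecondCountableTopology X] [NormedAddCommGroup F]
    [NormedSpace ℝ F] [SecondCountableTopology F] :
    ∃ E : ℕ → C(X, F), (∀ k, HasCompactSupport (E k)) ∧
      ∀ h : C(X, F), HasCompactSupport h → ∀ ε > 0, ∃ k, ∀ x, ‖E k x - h x‖ ≤ ε := by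
  let K := CompactExhaustion.choice X
  choose χ hχ1 _ hχc hχ01 using fun n =>
    exists_continuous_one_zero_of_isCompact (K.isCompact n) isClosed_empty
      (Set.disjoint_empty _)
  obtain ⟨d, hd⟩ := TopologicalSpace.exists_dense_seq C(X, F)
  let E : ℕ → C(X, F) := fun k => ⟨fun x => χ k.unpair.2 x • d k.unpair.1 x, by fun_prop⟩
  refine ⟨E, fun k => (hχc _).smul_right, fun h hh ε hε => ?_⟩
  obtain ⟨n, hn⟩ := K.exists_superset_of_isCompact hh
  have : CompactSpace (tsupport (χ n)) := isCompact_iff_compactSpace.1 (hχc n)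
  let ρ : C(X, F) → C(tsupport (χ n), F) := fun f => f.restrict _
  obtain ⟨i, hi⟩ : ∃ i, ρ (d i) ∈ Metric.ball (ρ h) ε :=
    hd.exists_mem_open (s := ρ ⁻¹' Metric.ball (ρ h) ε)
      (Metric.isOpen_ball.preimage (ContinuousMap.continuous_restrict _))
      ⟨h, Metric.mem_ball_self hε⟩
  refine ⟨Nat.pair i n, fun x => ?_⟩
  have hhχ : h x = χ n x • h x := by
    by_cases hx : x ∈ tsupport h
    · rw [hχ1 n (hn hx), Pi.one_apply, one_smul]
    · rw [image_eq_zero_of_notMem_tsupport hx, smul_zero]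
  rw [hhχ]
  simp only [E, Nat.unpair_pair, ContinuousMap.coe_mk, ← smul_sub, norm_smul, Real.norm_eq_abs]
  by_cases hx : x ∈ tsupport (χ n)
  · calc |χ n x| * ‖d i x - h x‖ ≤ 1 * ε := by
          gcongr
          · exact abs_le.2 ⟨by linarith [(hχ01 n x).1], (hχ01 n x).2⟩
          · rw [← dist_eq_norm]
            exact (ContinuousMap.dist_apply_le_dist (f := ρ (d i)) (g := ρ h) ⟨x, hx⟩).trans hi.le
      _ = ε := one_mul ε
  · rw [image_eq_zero_of_notMem_tsupport hx, abs_zero, zero_mul]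
    exact hε.le

theorem denseRange_toLp_of_forall_norm_sub_le {X F κ : Type*} [TopologicalSpace X] [NormalSpace X]
    [T2Space X] [LocallyCompactSpace X] [MeasurableSpace X] [BorelSpace X] [NormedAddCommGroup F]
    [NormedSpace ℝ F] {p : ℝ≥0∞} [Fact (1 ≤ p)] (hp : p ≠ ∞) {μ : Measure X}
    [IsFiniteMeasure μ] [μ.Regular] {E : κ → X → F} (hE : ∀ k, MemLp (E k) p μ)
    (happrox : ∀ h : C(X, F), HasCompactSupport h → ∀ ε > 0, ∃ k, ∀ x, ‖E k x - h x‖ ≤ ε) :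
    DenseRange fun k => (hE k).toLp (E k) := by
  refine Metric.denseRange_iff.2 fun f r hr => ?_
  obtain ⟨h, hhs, hfh, hhc, hh⟩ := (Lp.memLp f).exists_hasCompactSupport_eLpNorm_sub_le hp
    (ε := ENNReal.ofReal (r / 2)) (by simpa using hr)
  obtain ⟨δ, hδ, hcδ⟩ := exists_pos_mul_lt (half_pos hr) (measureUnivNNReal μ ^ p.toReal⁻¹ : ℝ)
  obtain ⟨k, hk⟩ := happrox ⟨h, hhc⟩ hhs δ hδ
  refine ⟨k, (dist_triangle f (hh.toLp h) _).trans_lt ?_⟩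
  have hfh' : dist f (hh.toLp h) ≤ r / 2 := by
    rw [Lp.dist_edist, ← Lp.toLp_coeFn f (Lp.memLp f), Lp.edist_toLp_toLp]
    exact ENNReal.toReal_le_of_le_ofReal (half_pos hr).le hfh
  have hhk : dist (hh.toLp h) ((hE k).toLp (E k)) < r / 2 := by
    rw [dist_eq_norm, ← MemLp.toLp_sub]
    refine (Lp.norm_le_of_ae_bound hδ.le ?_).trans_lt hcδ
    filter_upwards [(hh.sub (hE k)).coeFn_toLp] with x hx
    rw [hx, Pi.sub_apply, norm_sub_rev]
    exact hk x
  linarith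

theorem statement7_general (s : ℕ → ℝ)
    (g : ℕ → ℝ → ℂ) (hgc : ∀ j, Continuous (g j))
    (hgb : ∃ C : ℝ, ∀ j x, ‖g j x‖ ≤ C) :
    IsGδ {ν : ProbabilityMeasure ℝ |
        ∃ t : ℕ → ℝ, Tendsto t atTop atTop ∧
          ∀ j, WeakL2Tendsto (fun n x => xi (s j * t n) x) (g j) ν.toMeasure} := by
  obtain ⟨C, hC⟩ := hgb
  obtain ⟨E, hEs, hE⟩ := exists_seq_hasCompactSupport_forall_norm_sub_le ℝ ℂ
  choose CE hCE using fun k => (E k).continuous.bounded_above_of_compact_support (hEs k)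
  have hW : ∀ (ν : ProbabilityMeasure ℝ) (t : ℕ → ℝ),
      (∀ j, WeakL2Tendsto (fun n x => xi (s j * t n) x) (g j) ν.toMeasure) ↔
        ∀ k : ℕ, Tendsto
          (fun n => ∫ x, xi (s k.unpair.1 * t n) x * (starRingEnd ℂ) (E k.unpair.2 x) ∂ν)
          atTop (𝓝 (∫ x, g k.unpair.1 x * (starRingEnd ℂ) (E k.unpair.2 x) ∂ν)) := by
    intro ν t
    have hE2 : ∀ k, MemLp (E k) 2 ν.toMeasure :=
      fun k => (E k).continuous.memLp_of_hasCompactSupport (hEs k)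
    have hg2 : ∀ j, MemLp (g j) 2 ν.toMeasure :=
      fun j => .of_bound (hgc j).aestronglyMeasurable C (.of_forall (hC j))
    simp only [weakL2Tendsto_iff_of_denseRange (fun n => memLp_xi _ 2)
      (fun n => eLpNorm_xi_le _ 2) (hg2 _) hE2
      (denseRange_toLp_of_forall_norm_sub_le (by norm_num) hE2 hE)]
    exact ⟨fun h k => h _ _, fun h j i => by simpa using h (Nat.pair j i)⟩
  simp only [hW]
  exact isGδ_setOf_exists_tendsto_atTop
    (fun k T => continuous_integral_mul_conj_of_norm_le (continuous_xi _) (E _).continuous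
      (fun x => (norm_xi _ x).le) (hCE k.unpair.2))
    (fun k => continuous_integral_mul_conj_of_norm_le (hgc _) (E _).continuous
      (hC k.unpair.1) (hCE k.unpair.2))

theorem statement7 (s : ℕ → ℝ) (hs : ∀ j, 0 < s j)
    (g : ℕ → ℝ → ℂ) (hgc : ∀ j, Continuous (g j))
    (hgb : ∃ C : ℝ, ∀ j x, ‖g j x‖ ≤ C) :
    IsGδ {ν : ProbabilityMeasure ℝ |
        ∃ t : ℕ → ℝ, Tendsto t atTop atTop ∧
          ∀ j, WeakL2Tendsto (fun n x => xi (s j * t n) x) (g j) ν.toMeasure} :=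
  statement7_general s g hgc hgb
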